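/- arXiv:1402.0829 — 3 statements merged into one kernel-verified Lean document; each statement's English description precedes it below -/
import Mathlib

section
/- For every concave modulus of continuity ω satisfying the Dini condition ∫₀^ε ω(t)/t dt < ∞ for some ε > 0, and every 2π-periodic function f with modulus of continuity bounded by ω, the conjugate function f̃(x) = -(1/π) p.v.∫_{-π}^{π} f(t)/(2 tan((t-x)/2)) dt exists at every point x (the principal value integral converges). -/
open MeasureTheory Real Filter Set

noncomputable section

/-- ω is a concave modulus of continuity. -/
def IsConcaveModulus (ω : ℝ → ℝ) : Prop :=
  Continuous ω ∧ MonotoneOn ω (Ici 0) ∧ ω 0 = 0 ∧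
    (∀ s t : ℝ, 0 ≤ s → 0 ≤ t → ω (s + t) ≤ ω s + ω t) ∧
    (∀ t : ℝ, 0 ≤ t → 0 ≤ ω t) ∧ ConcaveOn ℝ (Ici 0) ω

/-- The Dini condition: ∫₀^ε ω(t)/t dt < ∞ for some ε > 0. -/
def DiniCondition (ω : ℝ → ℝ) : Prop :=
  ∃ ε > 0, IntegrableOn (fun t => ω t / t) (Ioo 0 ε)

/-- f is 2π-periodic with modulus of continuity bounded by ω. -/
def MemH (ω f : ℝ → ℝ) : Prop :=
  Function.Periodic f (2 * π) ∧ ∀ x y : ℝ, |f x - f y| ≤ ω |x - y|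

/-- The principal value integral defining the conjugate function converges to L at x. -/
def ConjAt (f : ℝ → ℝ) (x L : ℝ) : Prop :=
  Tendsto (fun δ : ℝ =>
      -(1 / π) * ∫ t in {t : ℝ | δ ≤ |t - x| ∧ |t - x| ≤ π},
        f t / (2 * Real.tan ((t - x) / 2)))
    (nhdsWithin 0 (Ioi 0)) (nhds L)

/-- g is the trigonometric conjugate of f. -/
def ConjFn (f g : ℝ → ℝ) : Prop := ∀ x : ℝ, ConjAt f x (g x)

/-- f belongs to W^r H_ω. -/
def MemWrH (r : ℕ) (ω f : ℝ → ℝ) : Prop :=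
  Function.Periodic f (2 * π) ∧ ContDiff ℝ r f ∧
    ∀ x y : ℝ, |iteratedDeriv r f x - iteratedDeriv r f y| ≤ ω |x - y|

/-! Folding the truncated integral about `x` turns it into
`∫ u in δ..π, (f (x + u) - f (x - u)) / (2 tan (u / 2))`. Since `2 tan (u / 2) ≥ u` on `(0, π)`
and `|f (x + u) - f (x - u)| ≤ ω (2u) ≤ 2 ω u`, this integrand is dominated by `2 ω u / u`,
which is integrable on `(0, π]` by the Dini condition; so the truncations converge as `δ → 0⁺`. -/

open Topology

lemma Real.measurable_tan : Measurable tan := by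
  rw [show tan = sin / cos from funext tan_eq_sin_div_cos]
  exact measurable_sin.div measurable_cos

lemma le_two_mul_tan_half {u : ℝ} (h0 : 0 ≤ u) (hπ : u < π) : u ≤ 2 * tan (u / 2) := by
  linarith [le_tan (x := u / 2) (by linarith) (by linarith)]

lemma abs_le_abs_two_mul_tan_half {s : ℝ} (hs : |s| < π) : |s| ≤ |2 * tan (s / 2)| := by
  rcases le_total 0 s with h | h
  · rw [abs_of_nonneg h] at hs ⊢
    exact (le_two_mul_tan_half h hs).trans (le_abs_self _)
  · rw [abs_of_nonpos h] at hs ⊢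
    have := le_two_mul_tan_half (neg_nonneg.2 h) hs
    rw [neg_div, tan_neg] at this
    linarith [neg_abs_le (2 * tan (s / 2))]

/-- At `|s| = π` the junk value `tan (π / 2) = 0` makes the left side vanish. -/
lemma abs_inv_two_mul_tan_half_le {s : ℝ} (hs : |s| ≤ π) : |(2 * tan (s / 2))⁻¹| ≤ |s|⁻¹ := by
  rcases hs.lt_or_eq with hs | hs
  · rcases eq_or_ne s 0 with rfl | hs0
    · simp
    rw [abs_inv]
    exact inv_anti₀ (abs_pos.2 hs0) (abs_le_abs_two_mul_tan_half hs)
  · rcases abs_eq pi_pos.le |>.1 hs with h | h <;>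
      simp [h, neg_div, tan_neg, tan_pi_div_two]

lemma continuous_of_abs_sub_le {ω f : ℝ → ℝ} (hωc : ContinuousAt ω 0) (hω0 : ω 0 = 0)
    (hf : ∀ x y, |f x - f y| ≤ ω |x - y|) : Continuous f := by
  refine continuous_iff_continuousAt.2 fun a => tendsto_iff_norm_sub_tendsto_zero.2 ?_
  have hdist : Tendsto (fun y : ℝ => |y - a|) (𝓝 a) (𝓝 0) := by
    simpa using (continuous_id.sub (continuous_const (y := a))).abs.tendsto a
  have hlim : Tendsto (fun y => ω |y - a|) (𝓝 a) (𝓝 0) := hω0 ▸ hωc.tendsto.comp hdist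
  exact squeeze_zero (fun _ => norm_nonneg _) (fun y => hf y a) hlim

lemma setOf_le_abs_sub_le_eq (x : ℝ) {a : ℝ} (ha : 0 ≤ a) (b : ℝ) :
    {t : ℝ | a ≤ |t - x| ∧ |t - x| ≤ b} = Icc (x - b) (x - a) ∪ Icc (x + a) (x + b) := by
  ext t
  simp only [mem_ofPred_eq, mem_union, mem_Icc, le_abs, abs_le]
  constructor
  · rintro ⟨h | h, h', h''⟩
    · right; constructor <;> linarith
    · left; constructor <;> linarith
  · rintro (⟨h, h'⟩ | ⟨h, h'⟩)
    · exact ⟨Or.inr (by linarith), by linarith, by linarith⟩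
    · exact ⟨Or.inl (by linarith), by linarith, by linarith⟩

lemma setIntegral_setOf_le_abs_sub_le {E : Type*} [NormedAddCommGroup E] [NormedSpace ℝ E]
    {g : ℝ → E} {x a b : ℝ} (ha : 0 < a) (hab : a ≤ b)
    (hg : IntegrableOn g {t : ℝ | a ≤ |t - x| ∧ |t - x| ≤ b}) :
    ∫ t in {t : ℝ | a ≤ |t - x| ∧ |t - x| ≤ b}, g t = ∫ u in a..b, (g (x + u) + g (x - u)) := by
  rw [setOf_le_abs_sub_le_eq x ha.le] at hg ⊢
  have hdisj : Disjoint (Icc (x - b) (x - a)) (Icc (x + a) (x + b)) :=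
    Set.disjoint_left.2 fun t ht ht' => by linarith [ht.2, ht'.1]
  obtain ⟨hl, hr⟩ := integrableOn_union.1 hg
  have hl' : IntervalIntegrable (fun u => g (x - u)) volume a b := by
    simpa using
      ((intervalIntegrable_iff_integrableOn_Icc_of_le (by linarith)).2 hl).comp_sub_left x |>.symm
  have hr' : IntervalIntegrable (fun u => g (x + u)) volume a b := by
    simpa using
      ((intervalIntegrable_iff_integrableOn_Icc_of_le (by linarith)).2 hr).comp_add_left x
  rw [setIntegral_union hdisj measurableSet_Icc hl hr, intervalIntegral.integral_add hr' hl',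
    intervalIntegral.integral_comp_add_left, intervalIntegral.integral_comp_sub_left,
    integral_Icc_eq_integral_Ioc, integral_Icc_eq_integral_Ioc,
    ← intervalIntegral.integral_of_le (by linarith),
    ← intervalIntegral.integral_of_le (by linarith), add_comm]

lemma tendsto_intervalIntegral_nhdsGT {E : Type*} [NormedAddCommGroup E] [NormedSpace ℝ E]
    {f : ℝ → E} {a b : ℝ} (hab : a < b) (hf : IntegrableOn f (Ioc a b)) :
    Tendsto (fun δ => ∫ u in δ..b, f u) (𝓝[>] a) (𝓝 (∫ u in a..b, f u)) := by
  have hf' : IntegrableOn f (uIcc a b) := by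
    rwa [uIcc_of_le hab.le, integrableOn_Icc_iff_integrableOn_Ioc]
  have hc := intervalIntegral.continuousOn_primitive_interval_left hf' a left_mem_uIcc
  rw [uIcc_of_le hab.le] at hc
  rw [← nhdsWithin_Ioc_eq_nhdsGT hab]
  exact hc.tendsto.mono_left (nhdsWithin_mono _ Ioc_subset_Icc_self)

lemma integrableOn_div_self_Ioc_of_dini {ω : ℝ → ℝ} (hωc : Continuous ω) (hd : DiniCondition ω)
    (b : ℝ) : IntegrableOn (fun t => ω t / t) (Ioc 0 b) := by
  obtain ⟨ε, hε, hint⟩ := hd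
  have hfar : IntegrableOn (fun t => ω t / t) (Icc ε b) :=
    (hωc.continuousOn.div continuousOn_id fun t ht => (hε.trans_le ht.1).ne').integrableOn_Icc
  refine (hint.union hfar).mono_set fun t ht => ?_
  rcases lt_or_ge t ε with h | h
  · exact Or.inl ⟨ht.1, h⟩
  · exact Or.inr ⟨h, ht.2⟩

lemma div_two_mul_tan_half_add_neg (f : ℝ → ℝ) (x u : ℝ) :
    f (x + u) / (2 * tan ((x + u - x) / 2)) + f (x - u) / (2 * tan ((x - u - x) / 2)) =
      (f (x + u) - f (x - u)) / (2 * tan (u / 2)) := by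
  rw [add_sub_cancel_left, sub_sub_cancel_left, neg_div, tan_neg]
  ring

lemma abs_sub_div_two_mul_tan_half_le {ω f : ℝ → ℝ}
    (hωsub : ∀ s t : ℝ, 0 ≤ s → 0 ≤ t → ω (s + t) ≤ ω s + ω t)
    (hf : ∀ x y, |f x - f y| ≤ ω |x - y|) (x : ℝ) {u : ℝ} (hu : u ∈ Ioc 0 π) :
    |(f (x + u) - f (x - u)) / (2 * tan (u / 2))| ≤ 2 * (ω u / u) := by
  have hdiff : |f (x + u) - f (x - u)| ≤ 2 * ω u := by
    have h := hf (x + u) (x - u)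
    rw [show x + u - (x - u) = u + u by ring, abs_of_pos (by linarith [hu.1] : 0 < u + u)] at h
    linarith [hωsub u u hu.1.le hu.1.le]
  have hker : |(2 * tan (u / 2))⁻¹| ≤ u⁻¹ := by
    have h := abs_inv_two_mul_tan_half_le (s := u) (by rw [abs_of_pos hu.1]; exact hu.2)
    rwa [abs_of_pos hu.1] at h
  calc |(f (x + u) - f (x - u)) / (2 * tan (u / 2))|
      = |f (x + u) - f (x - u)| * |(2 * tan (u / 2))⁻¹| := by rw [div_eq_mul_inv, abs_mul]
    _ ≤ 2 * ω u * u⁻¹ :=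
      mul_le_mul hdiff hker (abs_nonneg _) (by linarith [abs_nonneg (f (x + u) - f (x - u))])
    _ = 2 * (ω u / u) := by ring

lemma integrableOn_div_two_mul_tan_half {f : ℝ → ℝ} (hf : Continuous f) (x : ℝ) {δ : ℝ}
    (hδ : 0 < δ) :
    IntegrableOn (fun t => f t / (2 * tan ((t - x) / 2))) {t | δ ≤ |t - x| ∧ |t - x| ≤ π} := by
  obtain ⟨C, hC⟩ :=
    isCompact_Icc.exists_bound_of_continuousOn (hf.continuousOn (s := Icc (x - π) (x + π)))
  have hbound : ∀ t ∈ {t | δ ≤ |t - x| ∧ |t - x| ≤ π},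
      ‖f t / (2 * tan ((t - x) / 2))‖ ≤ C * δ⁻¹ := by
    rintro t ⟨hδt, htπ⟩
    have hft : |f t| ≤ C :=
      hC t ⟨by linarith [neg_abs_le (t - x)], by linarith [le_abs_self (t - x)]⟩
    calc ‖f t / (2 * tan ((t - x) / 2))‖ = |f t| * |(2 * tan ((t - x) / 2))⁻¹| := by
          rw [Real.norm_eq_abs, div_eq_mul_inv, abs_mul]
      _ ≤ C * δ⁻¹ := mul_le_mul hft ((abs_inv_two_mul_tan_half_le htπ).trans (inv_anti₀ hδ hδt))
          (abs_nonneg _) ((abs_nonneg _).trans hft)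
  have hmeas : Measurable fun t => f t / (2 * tan ((t - x) / 2)) :=
    hf.measurable.div ((measurable_tan.comp ((measurable_id.sub_const x).div_const 2)).const_mul 2)
  rw [setOf_le_abs_sub_le_eq x hδ.le] at hbound ⊢
  exact Measure.integrableOn_of_bounded
    (measure_union_lt_top measure_Icc_lt_top measure_Icc_lt_top).ne hmeas.aestronglyMeasurable
    (ae_restrict_of_forall_mem (measurableSet_Icc.union measurableSet_Icc) hbound)

lemma integrableOn_sub_div_two_mul_tan_half {ω f : ℝ → ℝ} (hωc : Continuous ω)
    (hd : DiniCondition ω) (hωsub : ∀ s t : ℝ, 0 ≤ s → 0 ≤ t → ω (s + t) ≤ ω s + ω t)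
    (hfc : Continuous f) (hf : ∀ x y, |f x - f y| ≤ ω |x - y|) (x : ℝ) :
    IntegrableOn (fun u => (f (x + u) - f (x - u)) / (2 * tan (u / 2))) (Ioc 0 π) :=
  ((integrableOn_div_self_Ioc_of_dini hωc hd π).const_mul 2).mono'
    (((hfc.comp (continuous_const_add x)).sub (hfc.comp (continuous_sub_left x))).measurable.div
      ((measurable_tan.comp (measurable_id.div_const 2)).const_mul 2)).aestronglyMeasurable
    (ae_restrict_of_forall_mem measurableSet_Ioc fun _ hu =>
      abs_sub_div_two_mul_tan_half_le hωsub hf x hu)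

/-- existence of the conjugate function at every point. -/
theorem conj_exists (ω f : ℝ → ℝ) (hω : IsConcaveModulus ω) (hd : DiniCondition ω)
    (hf : MemH ω f) : ∀ x : ℝ, ∃ L : ℝ, ConjAt f x L := by
  obtain ⟨hωc, -, hω0, hωsub, -, -⟩ := hω
  have hfc : Continuous f := continuous_of_abs_sub_le hωc.continuousAt hω0 hf.2
  intro x
  have hlim := tendsto_intervalIntegral_nhdsGT pi_pos
    (integrableOn_sub_div_two_mul_tan_half hωc hd hωsub hfc hf.2 x)
  refine ⟨_, (hlim.const_mul (-(1 / π))).congr' ?_⟩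
  filter_upwards [Ioo_mem_nhdsGT pi_pos] with δ hδ
  rw [setIntegral_setOf_le_abs_sub_le hδ.1 hδ.2.le (integrableOn_div_two_mul_tan_half hfc x hδ.1)]
  simp_rw [div_two_mul_tan_half_add_neg]
end
end

section
/- Let ω be a concave modulus of continuity with ∫₀^ε ω(t)/t dt < ∞ for some ε > 0. Then for every 2π-periodic f ∈ H_ω with ∫₀^{2π} f(t) dt = 0, the conjugate function satisfies ‖f̃‖_C ≤ (1/π) ∫₀^{π/2} ω(2t)/sin t dt, where ‖·‖_C denotes the sup norm. -/
open MeasureTheory Real Filter Set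

noncomputable section

/- Auxiliary lemmas -/

/-- auxiliary kernel: `1/(2 tan (u/2))` written with sin/cos. -/
def Kc (u : ℝ) : ℝ := Real.cos (u/2) / (2 * Real.sin (u/2))

lemma div_two_tan_eq (a y : ℝ) :
    a / (2 * Real.tan y) = a * (Real.cos y / (2 * Real.sin y)) := by
  rw [Real.tan_eq_sin_div_cos]
  rcases eq_or_ne (Real.sin y) 0 with hs | hs
  · simp [hs]
  rcases eq_or_ne (Real.cos y) 0 with hc | hc
  · simp [hc]
  field_simp

lemma Kc_measurable : Measurable Kc :=
  ((Real.continuous_cos.comp (continuous_id.div_const 2)).measurable).div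
    ((continuous_const.mul (Real.continuous_sin.comp (continuous_id.div_const 2))).measurable)

lemma Kc_nonneg {u : ℝ} (h0 : 0 ≤ u) (hπ : u ≤ π) : 0 ≤ Kc u := by
  have hc : 0 ≤ Real.cos (u/2) :=
    Real.cos_nonneg_of_mem_Icc ⟨by linarith [Real.pi_pos], by linarith⟩
  have hs : 0 ≤ Real.sin (u/2) :=
    Real.sin_nonneg_of_nonneg_of_le_pi (by linarith) (by linarith [Real.pi_pos])
  exact div_nonneg hc (by linarith)

lemma Kc_contOn (s : Set ℝ) (h : ∀ u ∈ s, Real.sin (u/2) ≠ 0) : ContinuousOn Kc s := by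
  apply ContinuousOn.div
  · exact (Real.continuous_cos.comp (continuous_id.div_const 2)).continuousOn
  · exact (continuous_const.mul (Real.continuous_sin.comp (continuous_id.div_const 2))).continuousOn
  · intro u hu
    have := h u hu
    intro hx
    apply this
    linarith [hx]

lemma sin_half_pos {u : ℝ} (h0 : 0 < u) (hπ : u ≤ π) : 0 < Real.sin (u/2) :=
  Real.sin_pos_of_pos_of_lt_pi (by linarith) (by linarith [Real.pi_pos])

lemma Kc_neg (u : ℝ) : Kc (-u) = -Kc u := by
  simp [Kc, neg_div, Real.sin_neg, Real.cos_neg, div_neg]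

lemma Kc_pi_sub (u : ℝ) : Kc (π - u) = Real.sin (u/2) / (2 * Real.cos (u/2)) := by
  rw [Kc, sub_div, Real.cos_pi_div_two_sub, Real.sin_pi_div_two_sub]

lemma Kc_add_pi_sub {u : ℝ} (h0 : 0 < u) (h : u ≤ π/2) :
    Kc u + Kc (π - u) = 1 / Real.sin u := by
  have hπ := Real.pi_pos
  have hs : 0 < Real.sin (u/2) := sin_half_pos h0 (by linarith)
  have hc : 0 < Real.cos (u/2) := Real.cos_pos_of_mem_Ioo ⟨by linarith, by linarith⟩
  have hsin : Real.sin u = 2 * Real.sin (u/2) * Real.cos (u/2) := by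
    have := Real.sin_two_mul (u/2)
    rw [show 2 * (u/2) = u by ring] at this
    linarith
  rw [Kc, Kc_pi_sub, hsin]
  have hpy := Real.sin_sq_add_cos_sq (u/2)
  field_simp
  nlinarith [hpy, mul_pos hs hc]

lemma Kc_le {u : ℝ} (h0 : 0 < u) (h : u ≤ π) : Kc u ≤ π / (2*u) := by
  have hπ := Real.pi_pos
  have hs : 0 < Real.sin (u/2) := sin_half_pos h0 h
  have hjordan : u / π ≤ Real.sin (u/2) := by
    have := Real.mul_le_sin (x := u/2) (by linarith) (by linarith)
    calc u / π = 2/π * (u/2) := by ring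
    _ ≤ Real.sin (u/2) := this
  have hup : 0 < u / π := by positivity
  have hj2 : u ≤ π * Real.sin (u/2) := by
    rw [div_le_iff₀ hπ] at hjordan; linarith
  calc Kc u ≤ 1 / (2 * Real.sin (u/2)) := by
        unfold Kc; gcongr
        all_goals first | exact Real.cos_le_one _ | linarith
  _ ≤ π / (2*u) := by
        rw [div_le_div_iff₀ (by linarith) (by positivity)]
        nlinarith

lemma dini_integrableOn {ω : ℝ → ℝ} (hωc : Continuous ω) {ε : ℝ} (hε : 0 < ε)
    (hεint : IntegrableOn (fun t => ω t / t) (Ioo 0 ε)) :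
    IntegrableOn (fun t => ω t / t) (Ioc 0 (π/2)) := by
  have hπ := Real.pi_pos
  set m := min ε (π/2) with hm
  have hm0 : 0 < m := lt_min hε (by linarith)
  have h2 : IntegrableOn (fun t => ω t / t) (Icc m (π/2)) := by
    apply ContinuousOn.integrableOn_Icc
    apply ContinuousOn.div hωc.continuousOn continuousOn_id
    intro u hu
    have : m ≤ u := hu.1
    exact ne_of_gt (lt_of_lt_of_le hm0 this)
  apply (hεint.union h2).mono_set
  intro u hu
  rcases lt_or_ge u ε with h | h
  · exact Or.inl ⟨hu.1, h⟩
  · exact Or.inr ⟨le_trans (min_le_left _ _) h, hu.2⟩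

lemma K_integrableOn {ω : ℝ → ℝ} (hωc : Continuous ω)
    (hωsub : ∀ s t : ℝ, 0 ≤ s → 0 ≤ t → ω (s + t) ≤ ω s + ω t)
    (hωnn : ∀ t : ℝ, 0 ≤ t → 0 ≤ ω t)
    {ε : ℝ} (hε : 0 < ε) (hεint : IntegrableOn (fun t => ω t / t) (Ioo 0 ε)) :
    IntegrableOn (fun u => ω (2*u) * Kc u) (Ioc 0 (π/2)) := by
  have hπ := Real.pi_pos
  have hdini := dini_integrableOn hωc hε hεint
  apply Integrable.mono' (g := fun u => π * (ω u / u)) (hdini.const_mul π)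
  · exact ((hωc.comp (continuous_const.mul continuous_id)).measurable.mul
      Kc_measurable).aestronglyMeasurable
  · rw [ae_restrict_iff' measurableSet_Ioc]
    filter_upwards with u hu
    have hu0 : 0 < u := hu.1
    have huπ : u ≤ π := le_trans hu.2 (by linarith)
    have hKnn : 0 ≤ Kc u := Kc_nonneg hu0.le huπ
    have hωnn2 : 0 ≤ ω (2*u) := hωnn _ (by linarith)
    rw [Real.norm_eq_abs, abs_of_nonneg (mul_nonneg hωnn2 hKnn)]
    have h1 : ω (2*u) ≤ 2 * ω u := by
      have := hωsub u u hu0.le hu0.le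
      rw [show u + u = 2*u by ring] at this
      linarith
    have h2 : Kc u ≤ π / (2*u) := Kc_le hu0 huπ
    calc ω (2*u) * Kc u ≤ (2 * ω u) * (π / (2*u)) :=
          mul_le_mul h1 h2 hKnn (by have := hωnn u hu0.le; linarith)
    _ = π * (ω u / u) := by field_simp

lemma fK_contOn (f : ℝ → ℝ) (hfc : Continuous f) (x : ℝ) (s : Set ℝ)
    (h : ∀ t ∈ s, Real.sin ((t - x)/2) ≠ 0) :
    ContinuousOn (fun t => f t * Kc (t - x)) s := by
  apply hfc.continuousOn.mul
  apply (Kc_contOn ((fun t => t - x) '' s) ?_).comp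
      (Continuous.continuousOn (by continuity)) ?_
  · rintro u ⟨t, ht, rfl⟩; exact h t ht
  · intro t ht; exact mem_image_of_mem _ ht

lemma sin_half_ne_pos {u : ℝ} (h0 : 0 < u) (hπ : u ≤ π) : Real.sin (u/2) ≠ 0 :=
  ne_of_gt (sin_half_pos h0 hπ)

lemma sin_half_ne_neg {u : ℝ} (h0 : -π ≤ u) (hπ : u < 0) : Real.sin (u/2) ≠ 0 := by
  have : Real.sin (-u/2) ≠ 0 := sin_half_ne_pos (by linarith) (by linarith)
  rw [neg_div, Real.sin_neg] at this
  intro h; exact this (by rw [h, neg_zero])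

lemma sym_identity (f : ℝ → ℝ) (hfc : Continuous f) (x δ : ℝ) (hδ : 0 < δ) (hδπ : δ < π) :
    ∫ t in {t : ℝ | δ ≤ |t - x| ∧ |t - x| ≤ π}, f t / (2 * Real.tan ((t - x) / 2))
    = ∫ u in δ..π, (f (x+u) - f (x-u)) * Kc u := by
  have hπ := Real.pi_pos
  have hset : {t : ℝ | δ ≤ |t - x| ∧ |t - x| ≤ π}
      = Icc (x-π) (x-δ) ∪ Icc (x+δ) (x+π) := by
    ext t
    simp only [mem_setOf_eq, mem_union, mem_Icc]
    rw [le_abs, abs_le]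
    constructor
    · rintro ⟨h1|h1, h2, h3⟩
      · right; constructor <;> linarith
      · left; constructor <;> linarith
    · rintro (⟨h1,h2⟩|⟨h1,h2⟩)
      · exact ⟨Or.inr (by linarith), by linarith, by linarith⟩
      · exact ⟨Or.inl (by linarith), by linarith, by linarith⟩
  have hfun : (fun t => f t / (2 * Real.tan ((t - x)/2))) = fun t => f t * Kc (t - x) := by
    funext t; rw [Kc]; exact div_two_tan_eq _ _
  have hcont1 : ContinuousOn (fun t => f t * Kc (t - x)) (Icc (x-π) (x-δ)) := by
    apply fK_contOn f hfc x
    intro t ht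
    exact sin_half_ne_neg (by linarith [ht.1]) (by linarith [ht.2])
  have hcont2 : ContinuousOn (fun t => f t * Kc (t - x)) (Icc (x+δ) (x+π)) := by
    apply fK_contOn f hfc x
    intro t ht
    exact sin_half_ne_pos (by linarith [ht.1]) (by linarith [ht.2])
  have hdisj : Disjoint (Icc (x-π) (x-δ)) (Icc (x+δ) (x+π)) := by
    rw [Set.disjoint_left]
    intro t ht1 ht2
    have := ht1.2; have := ht2.1
    linarith
  rw [hfun, hset, setIntegral_union hdisj measurableSet_Icc
    (hcont1.integrableOn_Icc) (hcont2.integrableOn_Icc)]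
  have e1 : ∫ t in Icc (x+δ) (x+π), f t * Kc (t-x) = ∫ u in δ..π, f (x+u) * Kc u := by
    rw [integral_Icc_eq_integral_Ioc, ← intervalIntegral.integral_of_le (by linarith),
      ← intervalIntegral.integral_comp_add_left (fun t => f t * Kc (t-x)) x]
    simp only [add_sub_cancel_left]
  have e2 : ∫ t in Icc (x-π) (x-δ), f t * Kc (t-x) = -∫ u in δ..π, f (x-u) * Kc u := by
    rw [integral_Icc_eq_integral_Ioc, ← intervalIntegral.integral_of_le (by linarith),
      ← intervalIntegral.integral_comp_sub_left (fun t => f t * Kc (t-x)) x]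
    rw [show (fun u => f (x - u) * Kc (x - u - x)) = fun u => -(f (x-u) * Kc u) by
      funext u; rw [show x - u - x = -u by ring, Kc_neg]; ring]
    rw [intervalIntegral.integral_neg]
  rw [e1, e2]
  have hi1 : IntervalIntegrable (fun u => f (x+u) * Kc u) volume δ π := by
    apply ContinuousOn.intervalIntegrable
    apply ((hfc.comp (continuous_const.add continuous_id)).continuousOn).mul
    apply Kc_contOn
    intro u hu
    rw [uIcc_of_le (by linarith)] at hu
    exact sin_half_ne_pos (by linarith [hu.1]) hu.2
  have hi2 : IntervalIntegrable (fun u => f (x-u) * Kc u) volume δ π := by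
    apply ContinuousOn.intervalIntegrable
    apply ((hfc.comp (continuous_const.sub continuous_id)).continuousOn).mul
    apply Kc_contOn
    intro u hu
    rw [uIcc_of_le (by linarith)] at hu
    exact sin_half_ne_pos (by linarith [hu.1]) hu.2
  rw [show (fun u => (f (x+u) - f (x-u)) * Kc u)
      = fun u => f (x+u) * Kc u - f (x-u) * Kc u by funext u; ring]
  rw [intervalIntegral.integral_sub hi1 hi2]
  ring

lemma sym_bound {ω f : ℝ → ℝ} (hωc : Continuous ω) (hω0 : ω 0 = 0)
    (hωsub : ∀ s t : ℝ, 0 ≤ s → 0 ≤ t → ω (s + t) ≤ ω s + ω t)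
    (hωnn : ∀ t : ℝ, 0 ≤ t → 0 ≤ ω t)
    {ε : ℝ} (hε : 0 < ε) (hεint : IntegrableOn (fun t => ω t / t) (Ioo 0 ε))
    (hper : Function.Periodic f (2 * π)) (hlip : ∀ x y : ℝ, |f x - f y| ≤ ω |x - y|)
    (hfc : Continuous f) (x δ : ℝ) (hδ : 0 < δ) (hδπ : δ < π/2) :
    |∫ u in δ..π, (f (x+u) - f (x-u)) * Kc u|
      ≤ ∫ t in (0:ℝ)..(π/2), ω (2*t) / Real.sin t := by
  have hπ := Real.pi_pos
  set F : ℝ → ℝ := fun u => f (x+u) - f (x-u) with hF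
  have hFcont : Continuous F :=
    (hfc.comp (continuous_const.add continuous_id)).sub
      (hfc.comp (continuous_const.sub continuous_id))
  have hKint : IntegrableOn (fun u => ω (2*u) * Kc u) (Ioc 0 (π/2)) :=
    K_integrableOn hωc hωsub hωnn hε hεint
  have hKc1 : ContinuousOn Kc (Icc δ π) := by
    apply Kc_contOn
    intro u hu
    exact sin_half_ne_pos (by linarith [hu.1]) hu.2
  have hKnn' : ∀ u ∈ Icc δ π, 0 ≤ Kc u := fun u hu =>
    Kc_nonneg (by linarith [hu.1]) hu.2
  -- Step 1+2 : |∫ F·K| ≤ ∫ |F|·K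
  have step12 : |∫ u in δ..π, F u * Kc u| ≤ ∫ u in δ..π, |F u| * Kc u := by
    refine le_trans (intervalIntegral.abs_integral_le_integral_abs (by linarith)) ?_
    apply le_of_eq
    apply intervalIntegral.integral_congr
    intro u hu
    rw [uIcc_of_le (by linarith)] at hu
    show |F u * Kc u| = |F u| * Kc u
    rw [abs_mul, abs_of_nonneg (hKnn' u hu)]
  -- interval integrabilities of |F|·K
  have hFKc : ContinuousOn (fun u => |F u| * Kc u) (Icc δ π) :=
    (hFcont.abs.continuousOn).mul hKc1
  have hi1 : IntervalIntegrable (fun u => |F u| * Kc u) volume δ (π/2) := by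
    apply ContinuousOn.intervalIntegrable
    apply hFKc.mono
    rw [uIcc_of_le (by linarith)]
    exact Icc_subset_Icc le_rfl (by linarith)
  have hi2 : IntervalIntegrable (fun u => |F u| * Kc u) volume (π/2) π := by
    apply ContinuousOn.intervalIntegrable
    apply hFKc.mono
    rw [uIcc_of_le (by linarith)]
    exact Icc_subset_Icc (by linarith) le_rfl
  -- Step 3 : split at π/2
  have step3 : (∫ u in δ..π, |F u| * Kc u)
      = (∫ u in δ..π/2, |F u| * Kc u) + ∫ u in (π/2)..π, |F u| * Kc u :=
    (intervalIntegral.integral_add_adjacent_intervals hi1 hi2).symm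
  -- Step 4 : lower part
  have hωKi : IntervalIntegrable (fun u => ω (2*u) * Kc u) volume δ (π/2) := by
    apply IntegrableOn.intervalIntegrable
    rw [uIcc_of_le (by linarith)]
    exact hKint.mono_set (Icc_subset_Ioc_iff (by linarith) |>.mpr ⟨hδ, le_rfl⟩)
  have step4 : (∫ u in δ..π/2, |F u| * Kc u) ≤ ∫ u in δ..π/2, ω (2*u) * Kc u := by
    apply intervalIntegral.integral_mono_on (by linarith) hi1 hωKi
    intro u hu
    have h1 : |F u| ≤ ω (2*u) := by
      have := hlip (x+u) (x-u)
      rw [show x + u - (x - u) = 2*u by ring,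
        abs_of_nonneg (show (0:ℝ) ≤ 2*u by linarith [hu.1])] at this
      exact this
    exact mul_le_mul_of_nonneg_right h1 (Kc_nonneg (by linarith [hu.1]) (by linarith [hu.2]))
  -- Step 5 : extend to 0
  have hωKi0 : IntervalIntegrable (fun u => ω (2*u) * Kc u) volume 0 δ := by
    rw [intervalIntegrable_iff, uIoc_of_le (by linarith)]
    exact hKint.mono_set (Ioc_subset_Ioc le_rfl (by linarith))
  have step5 : (∫ u in δ..π/2, ω (2*u) * Kc u) ≤ ∫ u in (0:ℝ)..π/2, ω (2*u) * Kc u := by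
    rw [← intervalIntegral.integral_add_adjacent_intervals hωKi0 hωKi]
    have : 0 ≤ ∫ u in (0:ℝ)..δ, ω (2*u) * Kc u := by
      apply intervalIntegral.integral_nonneg (by linarith)
      intro u hu
      exact mul_nonneg (hωnn _ (by linarith [hu.1]))
        (Kc_nonneg hu.1 (by linarith [hu.2]))
    linarith
  -- Step 6 : upper part, periodicity
  have hGc : ContinuousOn (fun u => ω (2*π - 2*u) * Kc u) (Icc (π/2) π) := by
    apply ContinuousOn.mul
    · exact (hωc.comp (continuous_const.sub (continuous_const.mul continuous_id))).continuousOn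
    · exact hKc1.mono (Icc_subset_Icc (by linarith) le_rfl)
  have hi3 : IntervalIntegrable (fun u => ω (2*π - 2*u) * Kc u) volume (π/2) π := by
    apply ContinuousOn.intervalIntegrable
    rwa [uIcc_of_le (by linarith)]
  have step6 : (∫ u in (π/2)..π, |F u| * Kc u) ≤ ∫ u in (π/2)..π, ω (2*π - 2*u) * Kc u := by
    apply intervalIntegral.integral_mono_on (by linarith) hi2 hi3
    intro u hu
    have h1 : |F u| ≤ ω (2*π - 2*u) := by
      have hp : f (x - u) = f ((x - u) + 2*π) := (hper (x-u)).symm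
      have := hlip (x+u) ((x-u) + 2*π)
      rw [← hp] at this
      rw [show x + u - (x - u + 2*π) = -(2*π - 2*u) by ring, abs_neg,
        abs_of_nonneg (show (0:ℝ) ≤ 2*π - 2*u by linarith [hu.2])] at this
      exact this
    exact mul_le_mul_of_nonneg_right h1 (Kc_nonneg (by linarith [hu.1]) hu.2)
  -- Step 7 : substitution u ↦ π - u
  have step7 : (∫ u in (π/2)..π, ω (2*π - 2*u) * Kc u)
      = ∫ u in (0:ℝ)..π/2, ω (2*u) * Kc (π - u) := by
    have := intervalIntegral.integral_comp_sub_left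
      (fun u => ω (2*π - 2*u) * Kc u) π (a := 0) (b := π/2)
    rw [show π - π/2 = π/2 by ring, sub_zero] at this
    rw [← this]
    apply intervalIntegral.integral_congr
    intro u _
    show ω (2*π - 2*(π - u)) * Kc (π - u) = ω (2*u) * Kc (π - u)
    rw [show 2*π - 2*(π - u) = 2*u by ring]
  -- Step 8 : combine the two halves
  have hKpic : ContinuousOn (fun u => ω (2*u) * Kc (π - u)) (Icc 0 (π/2)) := by
    rw [show (fun u => ω (2*u) * Kc (π - u))
        = fun u => ω (2*u) * (Real.sin (u/2) / (2 * Real.cos (u/2))) by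
      funext u; rw [Kc_pi_sub]]
    apply ContinuousOn.mul
    · exact (hωc.comp (continuous_const.mul continuous_id)).continuousOn
    · apply ContinuousOn.div
      · exact (Real.continuous_sin.comp (continuous_id.div_const 2)).continuousOn
      · exact (continuous_const.mul
          (Real.continuous_cos.comp (continuous_id.div_const 2))).continuousOn
      · intro u hu
        have : 0 < Real.cos (u/2) := by
          apply Real.cos_pos_of_mem_Ioo
          constructor <;> [linarith [hu.1]; linarith [hu.2]]
        positivity
  have hωKi00 : IntervalIntegrable (fun u => ω (2*u) * Kc u) volume 0 (π/2) := by
    rw [intervalIntegrable_iff, uIoc_of_le (by linarith)]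
    exact hKint
  have hKpii : IntervalIntegrable (fun u => ω (2*u) * Kc (π - u)) volume 0 (π/2) := by
    apply ContinuousOn.intervalIntegrable
    rwa [uIcc_of_le (by linarith)]
  have step8 : (∫ u in (0:ℝ)..π/2, ω (2*u) * Kc u)
      + (∫ u in (0:ℝ)..π/2, ω (2*u) * Kc (π - u))
      = ∫ t in (0:ℝ)..(π/2), ω (2*t) / Real.sin t := by
    rw [← intervalIntegral.integral_add hωKi00 hKpii]
    apply intervalIntegral.integral_congr
    intro u hu
    rw [uIcc_of_le (by linarith)] at hu
    show ω (2*u) * Kc u + ω (2*u) * Kc (π - u) = ω (2*u) / Real.sin u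
    rcases eq_or_lt_of_le hu.1 with h | h
    · rw [← h]
      norm_num [hω0]
    · rw [← mul_add, Kc_add_pi_sub h hu.2, mul_one_div]
  calc |∫ u in δ..π, F u * Kc u| ≤ ∫ u in δ..π, |F u| * Kc u := step12
  _ = (∫ u in δ..π/2, |F u| * Kc u) + ∫ u in (π/2)..π, |F u| * Kc u := step3
  _ ≤ (∫ u in (0:ℝ)..π/2, ω (2*u) * Kc u)
      + (∫ u in (0:ℝ)..π/2, ω (2*u) * Kc (π - u)) := by
    have := step4.trans step5
    have := step6.trans_eq step7
    linarith
  _ = ∫ t in (0:ℝ)..(π/2), ω (2*t) / Real.sin t := step8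

/-- sup-norm bound for the conjugate of a zero-mean f ∈ H_ω. -/
theorem conj_sup_bound (ω f g : ℝ → ℝ) (hω : IsConcaveModulus ω) (hd : DiniCondition ω)
    (hf : MemH ω f) (h0 : ∫ t in (0:ℝ)..(2 * π), f t = 0) (hg : ConjFn f g) :
    ∀ x : ℝ, |g x| ≤ (1 / π) * ∫ t in (0:ℝ)..(π / 2), ω (2 * t) / Real.sin t := by
  obtain ⟨hωc, hωmono, hω0, hωsub, hωnn, -⟩ := hω
  obtain ⟨ε, hε, hεint⟩ := hd
  obtain ⟨hper, hlip⟩ := hf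
  have hfc : Continuous f := by
    rw [continuous_iff_continuousAt]
    intro a
    rw [ContinuousAt]
    have h2 : Tendsto (fun y : ℝ => |y - a|) (nhds a) (nhds 0) := by
      have := ((continuous_id.sub (continuous_const (y := a))).abs).tendsto a
      simpa using this
    have h1 : Tendsto (fun y => ω |y - a|) (nhds a) (nhds 0) := by
      have := (hωc.tendsto 0).comp h2
      rwa [hω0] at this
    have h3 : Tendsto (fun y => f y - f a) (nhds a) (nhds 0) :=
      squeeze_zero_norm (fun y => hlip y a) h1
    have := h3.add (tendsto_const_nhds (x := f a))
    simpa using this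
  intro x
  have hx : Tendsto (fun δ : ℝ =>
      -(1 / π) * ∫ t in {t : ℝ | δ ≤ |t - x| ∧ |t - x| ≤ π},
        f t / (2 * Real.tan ((t - x) / 2)))
      (nhdsWithin 0 (Ioi 0)) (nhds (g x)) := hg x
  apply le_of_tendsto hx.abs
  have hmem : Ioo (0:ℝ) (π/2) ∈ nhdsWithin (0:ℝ) (Ioi 0) :=
    Ioo_mem_nhdsGT_of_mem ⟨le_refl 0, by positivity⟩
  filter_upwards [hmem] with δ hδ
  have hδπ : δ < π := by linarith [hδ.2, Real.pi_pos]
  show |-(1 / π) * ∫ t in {t : ℝ | δ ≤ |t - x| ∧ |t - x| ≤ π},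
      f t / (2 * Real.tan ((t - x) / 2))| ≤ _
  rw [sym_identity f hfc x δ hδ.1 hδπ]
  rw [abs_mul, abs_neg, abs_of_nonneg (by positivity : (0:ℝ) ≤ 1/π)]
  have hb := sym_bound hωc hω0 hωsub hωnn hε hεint hper hlip hfc x δ hδ.1 hδ.2
  exact mul_le_mul_of_nonneg_left hb (by positivity)
end
end

section
/- For the function ρ in the sharp estimate of the conjugate modulus of continuity: for each fixed t ∈ (0, 2π) and each u ∈ (0, t/2), there exists a unique ρ(u) ∈ (t/2, π) such that ∫₀^{u} sin(t/2)/(cos v − cos(t/2)) dv = −∫_{ρ(u)}^{π} sin(t/2)/(cos v − cos(t/2)) dv, and moreover ρ is strictly monotone in u. -/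
open MeasureTheory Real Filter Set

noncomputable section

/-!
With `a = t / 2 ∈ (0, π)`, the kernel `K = conjKernel a` is positive on `[0, a)` and negative on
`(a, π]`. Hence `F u = ∫₀ᵘ K` increases strictly on `[0, a)` from `F 0 = 0`, while
`G y = ∫_π^y K = -∫_y^π K` decreases strictly and continuously on `(a, π]` from `+∞` to `G π = 0`:
the blow-up at `a` comes from `cos a - cos v ≤ v - a`, which gives `-K v ≥ sin a / (v - a)`.
So `G y = F u` has exactly one solution `y = ρ u ∈ (a, π)`, and `ρ = G⁻¹ ∘ F` is strictly
decreasing.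
-/

open intervalIntegral Topology

theorem existsUnique_mem_Ioo_eq_of_tendsto_atTop {α δ : Type*} [ConditionallyCompleteLinearOrder α]
    [TopologicalSpace α] [OrderTopology α] [DenselyOrdered α] [LinearOrder δ] [TopologicalSpace δ]
    [OrderClosedTopology δ] {f : α → δ} {a b : α} {c : δ} (hab : a < b)
    (hf : ContinuousOn f (Ioc a b)) (hanti : StrictAntiOn f (Ioo a b))
    (hlim : Tendsto f (𝓝[>] a) atTop) (hc : f b < c) :
    ∃! y, y ∈ Ioo a b ∧ c = f y := by
  have : (𝓝[>] a).NeBot := nhdsGT_neBot_of_exists_gt ⟨b, hab⟩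
  have hl : 𝓝[>] a ≤ 𝓟 (Ioc a b) :=
    le_principal_iff.2 (mem_of_superset (Ioo_mem_nhdsGT hab) Ioo_subset_Ioc_self)
  obtain ⟨y, hy, hfy⟩ := isPreconnected_Ioc.intermediate_value_Ici ⟨hab, le_rfl⟩ hl hf hlim hc.le
  have hyb : y ≠ b := by rintro rfl; exact hc.ne hfy
  refine ⟨y, ⟨⟨hy.1, hy.2.lt_of_ne hyb⟩, hfy.symm⟩, fun z ⟨hz, hfz⟩ => ?_⟩
  exact hanti.injOn hz ⟨hy.1, hy.2.lt_of_ne hyb⟩ (hfz.symm.trans hfy.symm)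

theorem strictAntiOn_of_comp_eq {α β γ : Type*} [Preorder α] [LinearOrder β] [Preorder γ]
    {F : α → γ} {G : β → γ} {ρ : α → β} {s : Set α} {t : Set β} (hF : StrictMonoOn F s)
    (hG : StrictAntiOn G t) (hρ : MapsTo ρ s t) (h : ∀ u ∈ s, G (ρ u) = F u) :
    StrictAntiOn ρ s := fun u hu w hw huw =>
  (hG.lt_iff_gt (hρ hu) (hρ hw)).1 (by rw [h u hu, h w hw]; exact hF hu hw huw)

section Primitive

variable {f : ℝ → ℝ} {s : Set ℝ} {x₀ : ℝ}

theorem strictMonoOn_integral_of_pos [s.OrdConnected] (hf : ContinuousOn f s)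
    (hpos : ∀ x ∈ s, 0 < f x) (hx₀ : x₀ ∈ s) :
    StrictMonoOn (fun u => ∫ v in x₀..u, f v) s := by
  have hint : ∀ {x y}, x ∈ s → y ∈ s → IntervalIntegrable f volume x y := fun hx hy =>
    (hf.mono (OrdConnected.uIcc_subset ‹_› hx hy)).intervalIntegrable
  intro u hu w hw huw
  have hpos_uw : 0 < ∫ v in u..w, f v := intervalIntegral_pos_of_pos_on (hint hu hw)
    (fun x hx => hpos x (OrdConnected.out ‹_› hu hw (Ioo_subset_Icc_self hx))) huw
  simp only [← integral_add_adjacent_intervals (hint hx₀ hu) (hint hu hw)]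
  linarith

theorem strictAntiOn_integral_of_neg [s.OrdConnected] (hf : ContinuousOn f s)
    (hneg : ∀ x ∈ s, f x < 0) (hx₀ : x₀ ∈ s) :
    StrictAntiOn (fun u => ∫ v in x₀..u, f v) s := fun u hu w hw huw => by
  have := strictMonoOn_integral_of_pos (f := -f) hf.neg (fun x hx => neg_pos.2 (hneg x hx)) hx₀
    hu hw huw
  simpa only [Pi.neg_apply, intervalIntegral.integral_neg, neg_lt_neg_iff] using this

theorem continuousOn_primitive_Ioc {a b : ℝ} (hf : ContinuousOn f (Ioc a b)) :
    ContinuousOn (fun y => ∫ v in b..y, f v) (Ioc a b) := by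
  refine continuousOn_of_locally_continuousOn fun x hx =>
    ⟨Ioi ((a + x) / 2), isOpen_Ioi, mem_Ioi.2 (by linarith [hx.1]), ?_⟩
  have hint : IntervalIntegrable f volume ((a + x) / 2) b :=
    (hf.mono (Icc_subset_Ioc_left (by linarith [hx.1]))).intervalIntegrable_of_Icc
      (by linarith [hx.1, hx.2])
  refine (continuousOn_primitive_interval' hint right_mem_uIcc).mono fun y hy => ?_
  rw [uIcc_of_le (by linarith [hx.1, hx.2])]
  exact ⟨hy.2.le, hy.1.2⟩

end Primitive

def conjKernel (a v : ℝ) : ℝ := Real.sin a / (Real.cos v - Real.cos a)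

section Kernel

variable {a v : ℝ}

theorem continuousOn_conjKernel (ha : a ∈ Icc 0 π) :
    ContinuousOn (conjKernel a) (Icc 0 π \ {a}) :=
  continuousOn_const.div (continuous_cos.sub continuous_const).continuousOn fun _ hx =>
    sub_ne_zero.2 fun h => hx.2 (injOn_cos hx.1 ha h)

theorem continuousOn_conjKernel_Ico (ha : a ∈ Ioo 0 π) : ContinuousOn (conjKernel a) (Ico 0 a) :=
  (continuousOn_conjKernel ⟨ha.1.le, ha.2.le⟩).mono fun _ hx =>
    ⟨⟨hx.1, hx.2.le.trans ha.2.le⟩, hx.2.ne⟩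

theorem continuousOn_conjKernel_Ioc (ha : a ∈ Ioo 0 π) : ContinuousOn (conjKernel a) (Ioc a π) :=
  (continuousOn_conjKernel ⟨ha.1.le, ha.2.le⟩).mono fun _ hx =>
    ⟨⟨ha.1.le.trans hx.1.le, hx.2⟩, hx.1.ne'⟩

theorem conjKernel_pos (ha : a ∈ Ioo 0 π) (hv : v ∈ Ico 0 a) : 0 < conjKernel a v :=
  div_pos (sin_pos_of_pos_of_lt_pi ha.1 ha.2)
    (sub_pos.2 (cos_lt_cos_of_nonneg_of_le_pi hv.1 ha.2.le hv.2))

theorem conjKernel_neg (ha : a ∈ Ioo 0 π) (hv : v ∈ Ioc a π) : conjKernel a v < 0 :=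
  div_neg_of_pos_of_neg (sin_pos_of_pos_of_lt_pi ha.1 ha.2)
    (sub_neg.2 (cos_lt_cos_of_nonneg_of_le_pi ha.1.le hv.2 hv.1))

theorem sin_mul_inv_sub_le_neg_conjKernel (ha : a ∈ Ioo 0 π) (hv : v ∈ Ioc a π) :
    Real.sin a * (v - a)⁻¹ ≤ -conjKernel a v := by
  have hcos : 0 < Real.cos a - Real.cos v :=
    sub_pos.2 (cos_lt_cos_of_nonneg_of_le_pi ha.1.le hv.2 hv.1)
  have hlip : Real.cos a - Real.cos v ≤ v - a := by
    have := abs_cos_sub_cos_le a v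
    rw [abs_sub_comm a, abs_of_pos (sub_pos.2 hv.1)] at this
    exact (le_abs_self _).trans this
  rw [conjKernel, ← div_neg, neg_sub, ← div_eq_mul_inv]
  exact div_le_div_of_nonneg_left (sin_pos_of_pos_of_lt_pi ha.1 ha.2).le hcos hlip

theorem tendsto_integral_conjKernel_nhdsGT (ha : a ∈ Ioo 0 π) :
    Tendsto (fun y => ∫ v in π..y, conjKernel a v) (𝓝[>] a) atTop := by
  have hsub : Tendsto (fun y => y - a) (𝓝[>] a) (𝓝[>] 0) :=
    tendsto_nhdsWithin_iff.2
      ⟨((continuous_sub_right a).tendsto' a 0 (sub_self a)).mono_left nhdsWithin_le_nhds,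
        eventually_nhdsWithin_of_forall fun y hy => mem_Ioi.2 (sub_pos.2 hy)⟩
  have hlog : Tendsto (fun y => Real.sin a * Real.log ((π - a) * (y - a)⁻¹)) (𝓝[>] a) atTop :=
    (tendsto_log_atTop.comp ((tendsto_inv_nhdsGT_zero.comp hsub).const_mul_atTop
      (sub_pos.2 ha.2))).const_mul_atTop (sin_pos_of_pos_of_lt_pi ha.1 ha.2)
  refine tendsto_atTop_mono' _ ?_ hlog
  filter_upwards [Ioo_mem_nhdsGT ha.2] with y hy
  have hKint : IntervalIntegrable (conjKernel a) volume y π :=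
    ((continuousOn_conjKernel_Ioc ha).mono (Icc_subset_Ioc_left hy.1)).intervalIntegrable_of_Icc
      hy.2.le
  have hinvint : IntervalIntegrable (fun v => Real.sin a * (v - a)⁻¹) volume y π :=
    (continuousOn_const.mul ((continuousOn_id.sub continuousOn_const).inv₀ fun v hv =>
      (sub_pos.2 (hy.1.trans_le hv.1)).ne')).intervalIntegrable_of_Icc hy.2.le
  calc Real.sin a * Real.log ((π - a) * (y - a)⁻¹)
      = ∫ v in y..π, Real.sin a * (v - a)⁻¹ := by
        rw [intervalIntegral.integral_const_mul, integral_comp_sub_right (fun x => x⁻¹),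
          integral_inv_of_pos (sub_pos.2 hy.1) (sub_pos.2 ha.2), div_eq_mul_inv]
    _ ≤ ∫ v in y..π, -conjKernel a v :=
        integral_mono_on hy.2.le hinvint hKint.neg fun v hv =>
          sin_mul_inv_sub_le_neg_conjKernel ha ⟨hy.1.trans_le hv.1, hv.2⟩
    _ = ∫ v in π..y, conjKernel a v := by rw [intervalIntegral.integral_neg, integral_symm, neg_neg]

end Kernel

/-- existence, uniqueness and strict monotonicity of ρ. -/
theorem rho_exists_unique_mono (t : ℝ) (ht : t ∈ Ioo 0 (2 * π)) :
    (∀ u ∈ Ioo 0 (t / 2), ∃! y : ℝ, y ∈ Ioo (t / 2) π ∧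
      (∫ v in (0:ℝ)..u, Real.sin (t / 2) / (Real.cos v - Real.cos (t / 2))) =
        -∫ v in y..π, Real.sin (t / 2) / (Real.cos v - Real.cos (t / 2))) ∧
    (∀ ρ : ℝ → ℝ, (∀ u ∈ Ioo 0 (t / 2), ρ u ∈ Ioo (t / 2) π ∧
        (∫ v in (0:ℝ)..u, Real.sin (t / 2) / (Real.cos v - Real.cos (t / 2))) =
          -∫ v in (ρ u)..π, Real.sin (t / 2) / (Real.cos v - Real.cos (t / 2))) →
      StrictMonoOn ρ (Ioo 0 (t / 2)) ∨ StrictAntiOn ρ (Ioo 0 (t / 2))) := by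
  have ha : t / 2 ∈ Ioo 0 π := ⟨by linarith [ht.1], by linarith [ht.2]⟩
  have hF : StrictMonoOn (fun u => ∫ v in (0:ℝ)..u, conjKernel (t / 2) v) (Ico 0 (t / 2)) :=
    strictMonoOn_integral_of_pos (continuousOn_conjKernel_Ico ha) (fun _ => conjKernel_pos ha)
      ⟨le_rfl, ha.1⟩
  have hG : StrictAntiOn (fun y => ∫ v in π..y, conjKernel (t / 2) v) (Ioc (t / 2) π) :=
    strictAntiOn_integral_of_neg (continuousOn_conjKernel_Ioc ha) (fun _ => conjKernel_neg ha)
      ⟨ha.2, le_rfl⟩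
  simp only [← integral_symm]
  refine ⟨fun u hu => ?_, fun ρ hρ => Or.inr ?_⟩
  · have hFu : 0 < ∫ v in (0:ℝ)..u, conjKernel (t / 2) v := by
      simpa only [integral_same] using hF ⟨le_rfl, ha.1⟩ ⟨hu.1.le, hu.2⟩ hu.1
    exact existsUnique_mem_Ioo_eq_of_tendsto_atTop ha.2
      (continuousOn_primitive_Ioc (continuousOn_conjKernel_Ioc ha)) (hG.mono Ioo_subset_Ioc_self)
      (tendsto_integral_conjKernel_nhdsGT ha) (by rw [integral_same]; exact hFu)
  · exact strictAntiOn_of_comp_eq (hF.mono Ioo_subset_Ico_self) (hG.mono Ioo_subset_Ioc_self)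
      (fun u hu => (hρ u hu).1) fun u hu => (hρ u hu).2.symm
end
end
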